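/- Let σ : ℝ × ℝ → ℝ be a smooth solution of σ_t + σ_ωω = 0, and let u be a smooth solution of u_t = -1/u_xx with u_xx ≠ 0 everywhere. Then F(t,x) = σ(t, u_x(t,x)) and G(t,x) = σ_ω(t, u_x(t,x)) / u_xx(t,x) satisfy ∂F/∂t + ∂G/∂x = 0. -/

import Mathlib

noncomputable def pdt (f : ℝ × ℝ → ℝ) : ℝ × ℝ → ℝ :=
  fun p => deriv (fun s => f (s, p.2)) p.1

noncomputable def pdx (f : ℝ × ℝ → ℝ) : ℝ × ℝ → ℝ :=
  fun p => deriv (fun y => f (p.1, y)) p.2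

lemma hasDerivAt_pdx_aux (f : ℝ × ℝ → ℝ) (hf : Differentiable ℝ f) (a b : ℝ) :
    HasDerivAt (fun y => f (a, y)) (fderiv ℝ f (a, b) (0, 1)) b := by
  have h1 : HasDerivAt (fun y : ℝ => ((a, y) : ℝ × ℝ)) ((0 : ℝ), (1 : ℝ)) b :=
    (hasDerivAt_const b a).prodMk (hasDerivAt_id b)
  exact ((hf (a, b)).hasFDerivAt).comp_hasDerivAt b h1

lemma hasDerivAt_pdt_aux (f : ℝ × ℝ → ℝ) (hf : Differentiable ℝ f) (a b : ℝ) :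
    HasDerivAt (fun s => f (s, b)) (fderiv ℝ f (a, b) (1, 0)) a := by
  have h1 : HasDerivAt (fun s : ℝ => ((s, b) : ℝ × ℝ)) ((1 : ℝ), (0 : ℝ)) a :=
    (hasDerivAt_id a).prodMk (hasDerivAt_const a b)
  exact ((hf (a, b)).hasFDerivAt).comp_hasDerivAt a h1

lemma pdx_eq (f : ℝ × ℝ → ℝ) (hf : Differentiable ℝ f) (p : ℝ × ℝ) :
    pdx f p = fderiv ℝ f p (0, 1) := by
  have h := (hasDerivAt_pdx_aux f hf p.1 p.2).deriv
  simpa [pdx] using h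

lemma pdt_eq (f : ℝ × ℝ → ℝ) (hf : Differentiable ℝ f) (p : ℝ × ℝ) :
    pdt f p = fderiv ℝ f p (1, 0) := by
  have h := (hasDerivAt_pdt_aux f hf p.1 p.2).deriv
  simpa [pdt] using h

lemma contDiff_pdx (f : ℝ × ℝ → ℝ) (hf : ContDiff ℝ (⊤ : ℕ∞) f) : ContDiff ℝ (⊤ : ℕ∞) (pdx f) := by
  have h : pdx f = fun p => fderiv ℝ f p (0, 1) :=
    funext (pdx_eq f (hf.differentiable (by simp)))
  rw [h]
  exact (hf.fderiv_right (by simp)).clm_apply contDiff_const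

lemma contDiff_pdt (f : ℝ × ℝ → ℝ) (hf : ContDiff ℝ (⊤ : ℕ∞) f) : ContDiff ℝ (⊤ : ℕ∞) (pdt f) := by
  have h : pdt f = fun p => fderiv ℝ f p (1, 0) :=
    funext (pdt_eq f (hf.differentiable (by simp)))
  rw [h]
  exact (hf.fderiv_right (by simp)).clm_apply contDiff_const

lemma pdt_pdx_comm (u : ℝ × ℝ → ℝ) (hu : ContDiff ℝ (⊤ : ℕ∞) u) (p : ℝ × ℝ) :
    pdt (pdx u) p = pdx (pdt u) p := by
  obtain ⟨t, x⟩ := p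
  have hud : Differentiable ℝ u := hu.differentiable (by simp)
  have hfC : ContDiff ℝ (⊤ : ℕ∞) (fderiv ℝ u) := hu.fderiv_right (by simp)
  have hf'' : HasFDerivAt (fderiv ℝ u) (fderiv ℝ (fderiv ℝ u) (t, x)) (t, x) :=
    (hfC.differentiable (by simp) (t, x)).hasFDerivAt
  have hsym := second_derivative_symmetric (fun y => (hud y).hasFDerivAt) hf''
    ((1 : ℝ), (0 : ℝ)) ((0 : ℝ), (1 : ℝ))
  have e1 : ∀ c : ℝ × ℝ, HasFDerivAt (fun q => fderiv ℝ u q c)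
      ((ContinuousLinearMap.apply ℝ ℝ c).comp (fderiv ℝ (fderiv ℝ u) (t, x))) (t, x) :=
    fun c => (ContinuousLinearMap.apply ℝ ℝ c).hasFDerivAt.comp (t, x) hf''
  have epdx : pdx u = fun q => fderiv ℝ u q (0, 1) := funext (pdx_eq u hud)
  have epdt : pdt u = fun q => fderiv ℝ u q (1, 0) := funext (pdt_eq u hud)
  have h1 : pdt (pdx u) (t, x) = fderiv ℝ (fderiv ℝ u) (t, x) (1, 0) (0, 1) := by
    have curve : HasDerivAt (fun s : ℝ => ((s, x) : ℝ × ℝ)) ((1 : ℝ), (0 : ℝ)) t :=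
      (hasDerivAt_id t).prodMk (hasDerivAt_const t x)
    have h2 := (e1 (0, 1)).comp_hasDerivAt t curve
    have h3 := h2.deriv
    simp only [ContinuousLinearMap.coe_comp', Function.comp_apply,
      ContinuousLinearMap.apply_apply] at h3
    simp only [pdt, epdx]
    exact h3
  have h4 : pdx (pdt u) (t, x) = fderiv ℝ (fderiv ℝ u) (t, x) (0, 1) (1, 0) := by
    have curve : HasDerivAt (fun y : ℝ => ((t, y) : ℝ × ℝ)) ((0 : ℝ), (1 : ℝ)) x :=
      (hasDerivAt_const x t).prodMk (hasDerivAt_id x)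
    have h2 := (e1 (1, 0)).comp_hasDerivAt x curve
    have h3 := h2.deriv
    simp only [ContinuousLinearMap.coe_comp', Function.comp_apply,
      ContinuousLinearMap.apply_apply] at h3
    simp only [pdx, epdt]
    exact h3
  rw [h1, h4, hsym]

/-- (σ(t,u_x), σ_ω(t,u_x)/u_xx) is a conserved vector for u_t = -1/u_xx. -/
theorem conserved_vectors_L2 (σ u : ℝ × ℝ → ℝ)
    (hσ : ContDiff ℝ (⊤ : ℕ∞) σ) (hu : ContDiff ℝ (⊤ : ℕ∞) u)
    (hbackward : ∀ p : ℝ × ℝ, pdt σ p + pdx (pdx σ) p = 0)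
    (huxx : ∀ p : ℝ × ℝ, pdx (pdx u) p ≠ 0)
    (heq : ∀ p : ℝ × ℝ, pdt u p = -1 / pdx (pdx u) p) :
    ∀ p : ℝ × ℝ,
      pdt (fun q => σ (q.1, pdx u q)) p
        + pdx (fun q => pdx σ (q.1, pdx u q) / pdx (pdx u) q) p = 0 := by
  intro p
  obtain ⟨t, x⟩ := p
  have hσd : Differentiable ℝ σ := hσ.differentiable (by simp)
  set v := pdx u with hvdef
  have hvC : ContDiff ℝ (⊤ : ℕ∞) v := contDiff_pdx u hu
  have hvd : Differentiable ℝ v := hvC.differentiable (by simp)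
  set w := pdx v with hwdef
  have hwC : ContDiff ℝ (⊤ : ℕ∞) w := contDiff_pdx v hvC
  have hwd : Differentiable ℝ w := hwC.differentiable (by simp)
  set σω := pdx σ with hσωdef
  have hσωC : ContDiff ℝ (⊤ : ℕ∞) σω := contDiff_pdx σ hσ
  have hσωd : Differentiable ℝ σω := hσωC.differentiable (by simp)
  set q0 : ℝ × ℝ := (t, v (t, x)) with hq0
  have hwne : w (t, x) ≠ 0 := huxx (t, x)
  -- the x-derivative of w at (t,x)
  have hD : HasDerivAt (fun y => w (t, y)) (pdx w (t, x)) x := by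
    have h := hasDerivAt_pdx_aux w hwd t x
    rwa [← pdx_eq w hwd (t, x)] at h
  -- v_t = w_x / w^2
  have hvt : pdt v (t, x) = pdx w (t, x) / (w (t, x)) ^ 2 := by
    have hcomm : pdt v (t, x) = pdx (pdt u) (t, x) := pdt_pdx_comm u hu (t, x)
    have hpt : pdt u = fun q => -1 / w q := funext heq
    rw [hcomm, hpt]
    have h2 : HasDerivAt (fun y => -1 / w (t, y))
        ((0 * w (t, x) - (-1) * pdx w (t, x)) / (w (t, x)) ^ 2) x :=
      (hasDerivAt_const x (-1 : ℝ)).div hD hwne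
    show deriv (fun y => -1 / w (t, y)) x = pdx w (t, x) / w (t, x) ^ 2
    rw [h2.deriv]; ring
  -- time derivative of F
  have hvt' : HasDerivAt (fun s => v (s, x)) (pdt v (t, x)) t := by
    have h := hasDerivAt_pdt_aux v hvd t x
    rwa [← pdt_eq v hvd (t, x)] at h
  have hcurve : HasDerivAt (fun s : ℝ => ((s, v (s, x)) : ℝ × ℝ)) (1, pdt v (t, x)) t :=
    (hasDerivAt_id t).prodMk hvt'
  have hF : HasDerivAt (fun s => σ (s, v (s, x)))
      (fderiv ℝ σ q0 (1, pdt v (t, x))) t :=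
    ((hσd q0).hasFDerivAt).comp_hasDerivAt t hcurve
  have hsplit : fderiv ℝ σ q0 (1, pdt v (t, x)) = pdt σ q0 + pdt v (t, x) * σω q0 := by
    have h1 : ((1 : ℝ), pdt v (t, x)) =
        ((1 : ℝ), (0 : ℝ)) + pdt v (t, x) • ((0 : ℝ), (1 : ℝ)) := by
      simp [Prod.ext_iff]
    rw [h1, map_add, map_smul, ← pdt_eq σ hσd, ← pdx_eq σ hσd, smul_eq_mul, hσωdef]
  -- x-derivative of G
  have hcurve2 : HasDerivAt (fun y : ℝ => ((t, v (t, y)) : ℝ × ℝ)) (0, w (t, x)) x := by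
    refine (hasDerivAt_const x t).prodMk ?_
    have h := hasDerivAt_pdx_aux v hvd t x
    rwa [← pdx_eq v hvd (t, x)] at h
  have hN : HasDerivAt (fun y => σω (t, v (t, y))) (w (t, x) * pdx σω q0) x := by
    have h0 := ((hσωd q0).hasFDerivAt).comp_hasDerivAt x hcurve2
    have h1 : fderiv ℝ σω q0 (0, w (t, x)) = w (t, x) * pdx σω q0 := by
      have h2 : ((0 : ℝ), w (t, x)) = w (t, x) • ((0 : ℝ), (1 : ℝ)) := by simp
      rw [h2, map_smul, ← pdx_eq σω hσωd q0, smul_eq_mul]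
    rwa [h1] at h0
  have hG : HasDerivAt (fun y => σω (t, v (t, y)) / w (t, y))
      ((w (t, x) * pdx σω q0 * w (t, x) - σω (t, v (t, x)) * pdx w (t, x)) /
        (w (t, x)) ^ 2) x :=
    hN.div hD hwne
  -- identify the two partial derivatives in the goal
  have hFt : pdt (fun q => σ (q.1, pdx u q)) (t, x) =
      fderiv ℝ σ q0 (1, pdt v (t, x)) := by
    simp only [pdt]
    exact hF.deriv
  have hGx : pdx (fun q => pdx σ (q.1, pdx u q) / pdx (pdx u) q) (t, x) =
      (w (t, x) * pdx σω q0 * w (t, x) - σω (t, v (t, x)) * pdx w (t, x)) /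
        (w (t, x)) ^ 2 := by
    simp only [pdx]
    exact hG.deriv
  rw [hFt, hGx, hsplit, hvt]
  have hb : pdt σ q0 = - pdx σω q0 := by
    have h := hbackward q0
    linarith
  rw [hb]
  have hσωq0 : σω (t, v (t, x)) = σω q0 := rfl
  rw [hσωq0]
  field_simp
  ring
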